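/- arXiv:math/0109007 — 3 statements merged into one kernel-verified Lean document; each statement's English description precedes it below -/
import Mathlib

section
/- For every natural number n ≥ 1, the polynomial identity (1+t)·(1 + Σ_{i=1}^{n+1} (Σ_{u=i}^{n} C(n,u)·C(u-1,i-1))·t^i) = 1 + t·(2+t)^n holds in ℤ[t], where C denotes the binomial coefficient. -/
open Polynomial Finset

theorem stmt_1 (n : ℕ) (hn : 1 ≤ n) :
    (1 + X) * (1 + ∑ i ∈ Finset.Icc 1 (n + 1),
        (((∑ u ∈ Finset.Icc i n, n.choose u * (u - 1).choose (i - 1) : ℕ) : Polynomial ℤ))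
          * X ^ i)
      = 1 + X * (2 + X) ^ n := by
  have key : (∑ i ∈ Finset.Icc 1 (n + 1),
      (((∑ u ∈ Finset.Icc i n, n.choose u * (u - 1).choose (i - 1) : ℕ) : Polynomial ℤ)) * X ^ i)
      = ∑ u ∈ Finset.Icc 1 n, (n.choose u : Polynomial ℤ) * (X * (1 + X) ^ (u - 1)) := by
    have h1 : ∀ i ∈ Finset.Icc 1 (n + 1),
        (((∑ u ∈ Finset.Icc i n, n.choose u * (u - 1).choose (i - 1) : ℕ) : Polynomial ℤ)) * X ^ i
        = ∑ u ∈ Finset.Icc i n,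
            ((n.choose u * (u - 1).choose (i - 1) : ℕ) : Polynomial ℤ) * X ^ i := by
      intro i _
      push_cast
      rw [Finset.sum_mul]
    rw [Finset.sum_congr rfl h1]
    rw [Finset.sum_comm' (t' := Finset.Icc 1 n) (s' := fun u => Finset.Icc 1 u)
      (fun i u => by simp only [Finset.mem_Icc]; omega)]
    apply Finset.sum_congr rfl
    intro u hu
    simp only [Finset.mem_Icc] at hu
    have hIcc : Finset.Icc 1 u = Finset.Ico 1 (u + 1) := (Finset.Ico_add_one_right_eq_Icc 1 u).symm
    rw [hIcc, Finset.sum_Ico_eq_sum_range]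
    have hb : ((1 : Polynomial ℤ) + X) ^ (u - 1)
        = ∑ j ∈ Finset.range u, ((u - 1).choose j : Polynomial ℤ) * X ^ j := by
      rw [add_comm, add_pow]
      have : u - 1 + 1 = u := by omega
      rw [this]
      apply Finset.sum_congr rfl
      intro j _
      ring
    rw [hb, Finset.mul_sum, Finset.mul_sum]
    apply Finset.sum_congr rfl
    intro j _
    have h2 : 1 + j - 1 = j := by omega
    rw [h2]
    push_cast
    ring
  rw [key]
  have expand : ((2 : Polynomial ℤ) + X) ^ n
      = 1 + ∑ u ∈ Finset.Icc 1 n, (n.choose u : Polynomial ℤ) * (1 + X) ^ u := by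
    have h2 : ((2 : Polynomial ℤ) + X) = (1 + X) + 1 := by ring
    rw [h2, add_pow]
    rw [Finset.sum_range_succ']
    have hIcc : Finset.Icc 1 n = Finset.Ico 1 (n + 1) := (Finset.Ico_add_one_right_eq_Icc 1 n).symm
    rw [hIcc, Finset.sum_Ico_eq_sum_range]
    simp only [pow_zero, one_pow, one_mul, mul_one, Nat.choose_zero_right, Nat.cast_one]
    rw [add_comm]
    congr 1
    apply Finset.sum_congr rfl
    intro j _
    rw [add_comm 1 j]
    ring
  rw [expand]
  have hS : ((1 : Polynomial ℤ) + X) *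
        ∑ u ∈ Finset.Icc 1 n, (n.choose u : Polynomial ℤ) * (X * (1 + X) ^ (u - 1))
      = X * ∑ u ∈ Finset.Icc 1 n, (n.choose u : Polynomial ℤ) * (1 + X) ^ u := by
    rw [Finset.mul_sum, Finset.mul_sum]
    apply Finset.sum_congr rfl
    intro u hu
    simp only [Finset.mem_Icc] at hu
    have : ((1 : Polynomial ℤ) + X) ^ u = (1 + X) * (1 + X) ^ (u - 1) := by
      conv_lhs => rw [show u = (u - 1) + 1 by omega]
      ring
    rw [this]
    ring
  rw [mul_add, mul_one, hS]
  ring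
end

section
/- For every natural number n ≥ 1 and every natural number i, the coefficient of t^i in the formal power series (1-t)·(1 - t·(2-t)^n)⁻¹ ∈ ℤ⟦t⟧ is nonnegative. -/
open PowerSeries Finset

namespace Stmt13Aux

/-- The key nonnegative coefficients. -/
def a (n m : ℕ) : ℕ := 2 ^ (n - m) * n.choose m - (n + 1).choose (m + 1)

lemma choose_le (n m : ℕ) (h : m ≤ n) :
    (n + 1).choose (m + 1) ≤ 2 ^ (n - m) * n.choose m := by
  have h1 : (n + 1) * n.choose m = (n + 1).choose (m + 1) * (m + 1) :=
    Nat.add_one_mul_choose_eq n m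
  have h2 : n + 1 ≤ (m + 1) * 2 ^ (n - m) := by
    obtain ⟨d, hd⟩ : ∃ d, m + d = n := ⟨n - m, by omega⟩
    have h3 : d < 2 ^ d := Nat.lt_two_pow_self
    have : n - m = d := by omega
    rw [this]
    nlinarith
  have : (m + 1) * (n + 1).choose (m + 1) ≤ (m + 1) * (2 ^ (n - m) * n.choose m) := by
    calc (m + 1) * (n + 1).choose (m + 1) = (n + 1) * n.choose m := by rw [h1]; ring
      _ ≤ ((m + 1) * 2 ^ (n - m)) * n.choose m := Nat.mul_le_mul_right _ h2
      _ = (m + 1) * (2 ^ (n - m) * n.choose m) := by ring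
  exact Nat.le_of_mul_le_mul_left this (by omega)

lemma cast_a (n m : ℕ) (h : m ≤ n) :
    ((a n m : ℤ)) = 2 ^ (n - m) * n.choose m - (n + 1).choose (m + 1) := by
  rw [a, Nat.cast_sub (choose_le n m h)]
  push_cast
  ring

/-- First binomial identity. -/
lemma S1 (n : ℕ) :
    ∑ m ∈ range (n + 1),
        (2 : ℤ⟦X⟧) ^ (n - m) * (n.choose m : ℤ⟦X⟧) * (X ^ (m + 1) * (1 - X) ^ (n - m))
      = X * (2 - X) ^ n := by
  have hb := add_pow (X : ℤ⟦X⟧) (2 * (1 - X)) n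
  have hx : (X + 2 * (1 - X) : ℤ⟦X⟧) = 2 - X := by ring
  rw [hx] at hb
  rw [hb, Finset.mul_sum]
  apply Finset.sum_congr rfl
  intro m _
  rw [mul_pow]
  ring

/-- Second binomial identity. -/
lemma S2 (n : ℕ) :
    ∑ m ∈ range (n + 1),
        ((n + 1).choose (m + 1) : ℤ⟦X⟧) * (X ^ (m + 1) * (1 - X) ^ (n - m))
      = 1 - (1 - X) ^ (n + 1) := by
  have hb := add_pow (X : ℤ⟦X⟧) (1 - X) (n + 1)
  have hx : (X + (1 - X) : ℤ⟦X⟧) = 1 := by ring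
  rw [hx, one_pow] at hb
  rw [Finset.sum_range_succ'] at hb
  have h0 : (X : ℤ⟦X⟧) ^ 0 * (1 - X) ^ (n + 1 - 0) * ((n + 1).choose 0 : ℤ⟦X⟧)
      = (1 - X) ^ (n + 1) := by simp
  rw [h0] at hb
  have hs : ∑ m ∈ range (n + 1),
      (X : ℤ⟦X⟧) ^ (m + 1) * (1 - X) ^ (n + 1 - (m + 1)) * ((n + 1).choose (m + 1) : ℤ⟦X⟧)
      = ∑ m ∈ range (n + 1),
        ((n + 1).choose (m + 1) : ℤ⟦X⟧) * (X ^ (m + 1) * (1 - X) ^ (n - m)) := by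
    apply Finset.sum_congr rfl
    intro m _
    have : n + 1 - (m + 1) = n - m := by omega
    rw [this]
    ring
  rw [hs] at hb
  linear_combination -hb

/-- The key polynomial identity. -/
lemma key (n : ℕ) :
    (1 - X * (2 - X) ^ n : ℤ⟦X⟧)
      = (1 - X) ^ (n + 1)
        - ∑ m ∈ range (n + 1),
            PowerSeries.C (R := ℤ) (a n m : ℤ) * (X ^ (m + 1) * (1 - X) ^ (n - m)) := by
  have hsplit : ∑ m ∈ range (n + 1),
      PowerSeries.C (R := ℤ) (a n m : ℤ) * (X ^ (m + 1) * (1 - X) ^ (n - m))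
      = ∑ m ∈ range (n + 1),
          ((2 : ℤ⟦X⟧) ^ (n - m) * (n.choose m : ℤ⟦X⟧) * (X ^ (m + 1) * (1 - X) ^ (n - m))
            - ((n + 1).choose (m + 1) : ℤ⟦X⟧) * (X ^ (m + 1) * (1 - X) ^ (n - m))) := by
    apply Finset.sum_congr rfl
    intro m hm
    have hm' : m ≤ n := by
      have := Finset.mem_range.mp hm; omega
    rw [cast_a n m hm', map_sub, map_mul, map_pow, map_natCast, map_natCast, map_ofNat]
    ring
  rw [hsplit, Finset.sum_sub_distrib, S1, S2]
  ring

noncomputable def u : ℤ⟦X⟧ := mk 1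

lemma hu : ((1 : ℤ⟦X⟧) - X) * u = 1 := by
  rw [u, mul_comm]
  exact mk_one_mul_one_sub_eq_one (S := ℤ)

lemma hupow (k : ℕ) : ((1 : ℤ⟦X⟧) - X) ^ k * u ^ k = 1 := by
  rw [← mul_pow, hu, one_pow]

/-- Nonnegativity of all coefficients. -/
def NN (F : ℤ⟦X⟧) : Prop := ∀ i, 0 ≤ PowerSeries.coeff (R := ℤ) i F

lemma NN_u : NN u := by
  intro i
  rw [u, coeff_mk]
  norm_num

lemma NN_one : NN (1 : ℤ⟦X⟧) := by
  intro i
  rw [coeff_one]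
  split <;> norm_num

lemma NN_mul {A B : ℤ⟦X⟧} (hA : NN A) (hB : NN B) : NN (A * B) := by
  intro i
  rw [coeff_mul]
  exact Finset.sum_nonneg fun p _ => mul_nonneg (hA _) (hB _)

lemma NN_pow {A : ℤ⟦X⟧} (hA : NN A) (k : ℕ) : NN (A ^ k) := by
  induction k with
  | zero => simpa using NN_one
  | succ k ih => rw [pow_succ]; exact NN_mul ih hA

end Stmt13Aux

open Stmt13Aux

theorem stmt_13 (n : ℕ) (hn : 1 ≤ n) (i : ℕ) :
    0 ≤ PowerSeries.coeff (R := ℤ) i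
        ((1 - X) * PowerSeries.invOfUnit (1 - X * (2 - X) ^ n) 1) := by
  set v : ℤ⟦X⟧ := PowerSeries.invOfUnit (1 - X * (2 - X) ^ n) 1 with hvdef
  have hconst : constantCoeff (R := ℤ) (1 - X * (2 - X) ^ n) = ((1 : ℤˣ) : ℤ) := by
    simp
  have hv : ((1 : ℤ⟦X⟧) - X * (2 - X) ^ n) * v = 1 :=
    PowerSeries.mul_invOfUnit _ 1 hconst
  -- the fixed point equation
  have hkey' : ((1 : ℤ⟦X⟧) - X) ^ (n + 1)
      = (1 - X * (2 - X) ^ n)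
        + ∑ m ∈ range (n + 1),
            PowerSeries.C (R := ℤ) (a n m : ℤ) * (X ^ (m + 1) * (1 - X) ^ (n - m)) := by
    linear_combination -key n
  have h1 : ((1 : ℤ⟦X⟧) - X) ^ (n + 1) * u ^ n = 1 - X := by
    have : ((1 : ℤ⟦X⟧) - X) ^ (n + 1) * u ^ n = ((1 - X) ^ n * u ^ n) * (1 - X) := by ring
    rw [this, hupow, one_mul]
  have e1 : ∀ m, m ≤ n → ((1 : ℤ⟦X⟧) - X) ^ (n - m) * u ^ n = u ^ m := by
    intro m hm
    have hun : (u : ℤ⟦X⟧) ^ n = u ^ (n - m) * u ^ m := by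
      rw [← pow_add]
      congr 1
      omega
    rw [hun, ← mul_assoc, hupow, one_mul]
  have e2 : ∀ m : ℕ, (u : ℤ⟦X⟧) ^ m * v = u ^ (m + 1) * ((1 - X) * v) := by
    intro m
    have huv : (u : ℤ⟦X⟧) * ((1 - X) * v) = v := by
      rw [← mul_assoc, mul_comm u (1 - X), hu, one_mul]
    rw [pow_succ, mul_assoc, huv]
  have hfix : (1 - X) * v
      = u ^ n + ∑ m ∈ range (n + 1),
          PowerSeries.C (R := ℤ) (a n m : ℤ) * (X ^ (m + 1) * (u ^ (m + 1) * ((1 - X) * v))) := by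
    calc (1 - X) * v = (((1 : ℤ⟦X⟧) - X) ^ (n + 1) * u ^ n) * v := by rw [h1]
      _ = ((1 - X * (2 - X) ^ n) * v) * u ^ n
          + ∑ m ∈ range (n + 1),
              PowerSeries.C (R := ℤ) (a n m : ℤ) * (X ^ (m + 1) * (1 - X) ^ (n - m)) * u ^ n * v := by
            rw [hkey', add_mul, add_mul, Finset.sum_mul, Finset.sum_mul]
            ring
      _ = u ^ n + ∑ m ∈ range (n + 1),
            PowerSeries.C (R := ℤ) (a n m : ℤ) * (X ^ (m + 1) * (u ^ (m + 1) * ((1 - X) * v))) := by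
          rw [hv, one_mul]
          congr 1
          apply Finset.sum_congr rfl
          intro m hm
          have hm' : m ≤ n := by
            have := Finset.mem_range.mp hm; omega
          calc PowerSeries.C (R := ℤ) (a n m : ℤ) * (X ^ (m + 1) * (1 - X) ^ (n - m)) * u ^ n * v
              = PowerSeries.C (R := ℤ) (a n m : ℤ)
                  * (X ^ (m + 1) * ((((1 : ℤ⟦X⟧) - X) ^ (n - m) * u ^ n) * v)) := by ring
            _ = PowerSeries.C (R := ℤ) (a n m : ℤ) * (X ^ (m + 1) * (u ^ m * v)) := by
                rw [e1 m hm']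
            _ = PowerSeries.C (R := ℤ) (a n m : ℤ)
                  * (X ^ (m + 1) * (u ^ (m + 1) * ((1 - X) * v))) := by rw [e2 m]
  -- strong induction on the coefficient index
  induction i using Nat.strong_induction_on with
  | _ i ih =>
    rw [hfix, map_add, map_sum]
    apply add_nonneg
    · exact NN_pow NN_u n i
    · apply Finset.sum_nonneg
      intro m _
      rw [PowerSeries.coeff_C_mul]
      apply mul_nonneg (Int.natCast_nonneg _)
      rw [coeff_mul]
      apply Finset.sum_nonneg
      intro p hp
      by_cases h : p.1 = m + 1
      · rw [coeff_X_pow, if_pos h, one_mul]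
        have hpi : p.1 + p.2 = i := Finset.HasAntidiagonal.mem_antidiagonal.mp hp
        have hp2 : p.2 < i := by omega
        rw [coeff_mul]
        apply Finset.sum_nonneg
        intro q hq
        have hq2 : q.2 < i := by
          have := Finset.HasAntidiagonal.mem_antidiagonal.mp hq; omega
        exact mul_nonneg (NN_pow NN_u (m + 1) q.1) (ih q.2 hq2)
      · rw [coeff_X_pow, if_neg h, zero_mul]
end

section
/- For every natural number n ≥ 1 and every integer i ≥ 1, Σ_{j=0}^{i} (-1)^j · c_j · d_{i-j} = 0, where c_j is the coefficient of t^j in (1-t)·(1-t·(2-t)^n)⁻¹ ∈ ℚ⟦t⟧ and d_k is the coefficient of t^k in the polynomial (1+t·(2+t)^n)/(1+t). -/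
open PowerSeries Finset

theorem stmt_14 (n : ℕ) (hn : 1 ≤ n) (p : Polynomial ℚ)
    (hp : (1 + Polynomial.X) * p = 1 + Polynomial.X * (2 + Polynomial.X) ^ n)
    (i : ℕ) (hi : 1 ≤ i) :
    ∑ j ∈ Finset.range (i + 1),
        (-1 : ℚ) ^ j * PowerSeries.coeff (R := ℚ) j ((1 - X) * (1 - X * (2 - X) ^ n)⁻¹)
          * p.coeff (i - j) = 0 := by
  set g : PowerSeries ℚ := 1 - X * (2 - X) ^ n with hg
  set A : PowerSeries ℚ := (1 - X) * g⁻¹ with hA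
  have hgc : constantCoeff g ≠ 0 := by
    simp [hg, map_sub, map_mul, map_pow]
  have hginv : g * g⁻¹ = 1 := PowerSeries.mul_inv_cancel g hgc
  set B : PowerSeries ℚ := rescale (-1 : ℚ) A with hB
  have hAg : A * g = 1 - X := by
    rw [hA, mul_assoc, mul_comm g⁻¹ g, hginv, mul_one]
  have hresX : rescale (-1 : ℚ) X = -X := by
    ext k
    simp [coeff_rescale, coeff_X]
  have hresg : rescale (-1 : ℚ) g = 1 + X * (2 + X) ^ n := by
    rw [hg, map_sub, map_one, map_mul, map_pow, map_sub, hresX, map_ofNat]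
    ring
  have hB1 : B * (1 + X * (2 + X) ^ n) = 1 + X := by
    rw [hB, ← hresg, ← map_mul, hAg, map_sub, map_one, hresX, sub_neg_eq_add]
  have hphp : ((1 + Polynomial.X) * p : Polynomial ℚ).toPowerSeries
      = ((1 + Polynomial.X * (2 + Polynomial.X) ^ n : Polynomial ℚ)).toPowerSeries := by
    rw [hp]
  have hpps : (1 + X) * (p : PowerSeries ℚ) = 1 + X * (2 + X) ^ n := by
    have := hphp
    push_cast at this
    have h2 : ((2 : Polynomial ℚ) : PowerSeries ℚ) = 2 := by rw [show (2 : Polynomial ℚ) = Polynomial.C 2 from rfl, Polynomial.coe_C]; exact map_ofNat (PowerSeries.C (R := ℚ)) 2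
    rw [h2] at this
    exact this
  have hBp : B * (p : PowerSeries ℚ) = 1 := by
    have hX1 : (1 + X : PowerSeries ℚ) ≠ 0 := by
      intro h
      have := congrArg (constantCoeff (R := ℚ)) h
      simp at this
    apply mul_left_cancel₀ hX1
    rw [mul_one]
    calc (1 + X) * (B * (p : PowerSeries ℚ)) = B * ((1 + X) * (p : PowerSeries ℚ)) := by ring
      _ = B * (1 + X * (2 + X) ^ n) := by rw [hpps]
      _ = 1 + X := hB1
  have key : (PowerSeries.coeff (R := ℚ) i) (B * (p : PowerSeries ℚ)) = 0 := by
    rw [hBp]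
    simp [PowerSeries.coeff_one]
    omega
  rw [PowerSeries.coeff_mul] at key
  rw [Finset.Nat.sum_antidiagonal_eq_sum_range_succ_mk] at key
  rw [← key]
  apply Finset.sum_congr rfl
  intro j hj
  rw [coeff_rescale]
  simp [Polynomial.coeff_coe]
end
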